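/- arXiv:2308.00861 — 4 statements merged into one kernel-verified Lean document; each statement's English description precedes it below -/
import Mathlib

section
/- Variational free energy bounds surprise via Jeffrey's posterior: with M a full-support joint distribution on S × O, ξ a distribution on O, and q a full-support distribution on S, the variational free energy F(q) = ∑_{s,o} q(s)ξ(o)(log q(s) − log M(s,o)) satisfies F(q) ≥ D_KL(q ‖ J) + S(ξ, M_O), where J(s) = ∑_o ξ(o) M(s,o)/M_O(o) is the Jeffrey update and S(ξ, M_O) = −∑_o ξ(o) log M_O(o). -/
/-!
Write `M s o = M_O(o) · (M s o / M_O(o))`. Because `ξ` and `q` are probability vectors, the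
`log M_O` part of the free energy splits off as exactly the surprise `S(ξ, M_O)`, and what is left
for each `s` is `q s · (log q s - ∑ₒ ξ o · log (M s o / M_O o))`. Concavity of `log` (Jensen with
weights `ξ`) bounds the inner average by `log J s`, leaving `∑ₛ q s · log (q s / J s) = D_KL(q ‖ J)`.
-/

open Finset Real

namespace Real

theorem sum_mul_log_le_log_sum_mul {ι : Type*} {t : Finset ι} {w x : ι → ℝ}
    (hw0 : ∀ i ∈ t, 0 ≤ w i) (hw1 : ∑ i ∈ t, w i = 1) (hx : ∀ i ∈ t, 0 < x i) :
    ∑ i ∈ t, w i * log (x i) ≤ log (∑ i ∈ t, w i * x i) :=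
  strictConcaveOn_log_Ioi.concaveOn.le_map_sum hw0 hw1 hx

theorem sum_mul_pos_of_sum_eq_one {ι : Type*} {t : Finset ι} {w x : ι → ℝ}
    (hw0 : ∀ i ∈ t, 0 ≤ w i) (hw1 : ∑ i ∈ t, w i = 1) (hx : ∀ i ∈ t, 0 < x i) :
    0 < ∑ i ∈ t, w i * x i :=
  (convex_Ioi (0 : ℝ)).sum_mem hw0 hw1 hx

end Real

section JeffreyUpdate

variable {S O : Type*} [Fintype S] {M : S → O → ℝ}

def sndMarginal (M : S → O → ℝ) (o : O) : ℝ := ∑ s, M s o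

theorem sndMarginal_pos [Nonempty S] (hM : ∀ s o, 0 < M s o) (o : O) : 0 < sndMarginal M o :=
  sum_pos (fun s _ => hM s o) univ_nonempty

theorem div_sndMarginal_pos (hM : ∀ s o, 0 < M s o) (s : S) (o : O) :
    0 < M s o / sndMarginal M o :=
  have : Nonempty S := ⟨s⟩
  div_pos (hM s o) (sndMarginal_pos hM o)

variable [Fintype O] {ξ : O → ℝ}

noncomputable def jeffreyUpdate (M : S → O → ℝ) (ξ : O → ℝ) (s : S) : ℝ :=
  ∑ o, ξ o * (M s o / sndMarginal M o)

theorem jeffreyUpdate_pos (hM : ∀ s o, 0 < M s o) (hξ0 : ∀ o, 0 ≤ ξ o) (hξ1 : ∑ o, ξ o = 1)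
    (s : S) : 0 < jeffreyUpdate M ξ s :=
  sum_mul_pos_of_sum_eq_one (fun o _ => hξ0 o) hξ1 fun o _ => div_sndMarginal_pos hM s o

theorem sum_mul_log_div_sndMarginal_le_log_jeffreyUpdate (hM : ∀ s o, 0 < M s o)
    (hξ0 : ∀ o, 0 ≤ ξ o) (hξ1 : ∑ o, ξ o = 1) (s : S) :
    ∑ o, ξ o * log (M s o / sndMarginal M o) ≤ log (jeffreyUpdate M ξ s) :=
  sum_mul_log_le_log_sum_mul (fun o _ => hξ0 o) hξ1 fun o _ => div_sndMarginal_pos hM s o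

theorem sum_mul_log_sub_log_eq (hM : ∀ s o, 0 < M s o) (hξ1 : ∑ o, ξ o = 1) (c : ℝ) (s : S) :
    ∑ o, ξ o * (c - log (M s o)) =
      c - ∑ o, ξ o * log (M s o / sndMarginal M o) - ∑ o, ξ o * log (sndMarginal M o) := by
  have : Nonempty S := ⟨s⟩
  simp only [log_div (hM s _).ne' (sndMarginal_pos hM _).ne', mul_sub, sum_sub_distrib,
    ← sum_mul, hξ1, one_mul]
  ring

theorem mul_log_div_jeffreyUpdate_sub_le (hM : ∀ s o, 0 < M s o) (hξ0 : ∀ o, 0 ≤ ξ o)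
    (hξ1 : ∑ o, ξ o = 1) {q : ℝ} (hq : 0 < q) (s : S) :
    q * log (q / jeffreyUpdate M ξ s) - q * ∑ o, ξ o * log (sndMarginal M o) ≤
      ∑ o, q * ξ o * (log q - log (M s o)) := by
  have hJensen := mul_le_mul_of_nonneg_left
    (sum_mul_log_div_sndMarginal_le_log_jeffreyUpdate hM hξ0 hξ1 s) hq.le
  simp only [mul_assoc, ← mul_sum, sum_mul_log_sub_log_eq hM hξ1,
    log_div hq.ne' (jeffreyUpdate_pos hM hξ0 hξ1 s).ne']
  linarith

end JeffreyUpdate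

theorem vfe_ge_kl_jeffrey_plus_surprise_general {S O : Type*} [Fintype S] [Fintype O]
    (M : S → O → ℝ) (hM : ∀ s o, 0 < M s o)
    (ξ : O → ℝ) (hξ0 : ∀ o, 0 ≤ ξ o) (hξ1 : ∑ o, ξ o = 1)
    (q : S → ℝ) (hq : ∀ s, 0 < q s) (hq1 : ∑ s, q s = 1) :
    ∑ s, ∑ o, q s * ξ o * (Real.log (q s) - Real.log (M s o)) ≥
      (∑ s, q s * Real.log (q s / ∑ o, ξ o * (M s o / ∑ s', M s' o)))
        + (-∑ o, ξ o * Real.log (∑ s, M s o)) := by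
  have hsum := sum_le_sum fun s (_ : s ∈ univ) =>
    mul_log_div_jeffreyUpdate_sub_le hM hξ0 hξ1 (hq s) s
  rw [sum_sub_distrib, ← sum_mul, hq1, one_mul] at hsum
  unfold jeffreyUpdate sndMarginal at hsum
  linarith

/-- VFE bounds the KL divergence to the Jeffrey update plus the surprise. -/
theorem vfe_ge_kl_jeffrey_plus_surprise {S O : Type*} [Fintype S] [Fintype O]
    (M : S → O → ℝ) (hM : ∀ s o, 0 < M s o) (hM1 : ∑ s, ∑ o, M s o = 1)
    (ξ : O → ℝ) (hξ0 : ∀ o, 0 ≤ ξ o) (hξ1 : ∑ o, ξ o = 1)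
    (q : S → ℝ) (hq : ∀ s, 0 < q s) (hq1 : ∑ s, q s = 1) :
    ∑ s, ∑ o, q s * ξ o * (Real.log (q s) - Real.log (M s o)) ≥
      (∑ s, q s * Real.log (q s / ∑ o, ξ o * (M s o / ∑ s', M s' o)))
        + (-∑ o, ξ o * Real.log (∑ s, M s o)) :=
  vfe_ge_kl_jeffrey_plus_surprise_general M hM ξ hξ0 hξ1 q hq hq1
end

section
/- The VFE update is the minimizer of variational free energy: for a full-support joint distribution M on S × O and a distribution ξ on O, the distribution q*(s) = exp(∑_o ξ(o) log M(s|o)) / ∑_{s'} exp(∑_o ξ(o) log M(s'|o)) (the softmax of the expected log-posterior) satisfies F(q*) ≤ F(q) for every probability distribution q on S, where F(q) = ∑_{s,o} q(s)ξ(o)(log q(s) − log M(s,o)) and M(s|o) = M(s,o)/∑_{s'}M(s',o). -/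
/-- Gibbs' inequality. -/
lemma gibbs_aux {S : Type*} [Fintype S] (q p : S → ℝ) (hq : ∀ s, 0 ≤ q s)
    (hp : ∀ s, 0 < p s) (hq1 : ∑ s, q s = 1) (hp1 : ∑ s, p s = 1) :
    0 ≤ ∑ s, q s * (Real.log (q s) - Real.log (p s)) := by
  have key : ∀ s, q s * (Real.log (p s) - Real.log (q s)) ≤ p s - q s := by
    intro s
    rcases eq_or_lt_of_le (hq s) with h | h
    · simpa [← h] using (hp s).le
    · have hlog := Real.log_le_sub_one_of_pos (div_pos (hp s) h)
      rw [Real.log_div (hp s).ne' h.ne'] at hlog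
      have := mul_le_mul_of_nonneg_left hlog h.le
      have hne : q s ≠ 0 := h.ne'
      rw [mul_sub, mul_sub, mul_div_cancel₀ _ hne, mul_one] at this
      linarith
  have hsum : ∑ s, q s * (Real.log (p s) - Real.log (q s)) ≤ ∑ s, (p s - q s) :=
    Finset.sum_le_sum fun s _ => key s
  rw [Finset.sum_sub_distrib, hq1, hp1, sub_self] at hsum
  have : ∑ s, q s * (Real.log (q s) - Real.log (p s))
      = -∑ s, q s * (Real.log (p s) - Real.log (q s)) := by
    rw [← Finset.sum_neg_distrib]
    exact Finset.sum_congr rfl fun s _ => by ring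
  rw [this]
  linarith

/-- The VFE update (softmax of the expected log-posterior) minimizes VFE. -/
theorem vfe_update_minimizes_vfe {S O : Type*} [Fintype S] [Fintype O]
    [Nonempty S] [Nonempty O]
    (M : S → O → ℝ) (hM : ∀ s o, 0 < M s o) (hM1 : ∑ s, ∑ o, M s o = 1)
    (ξ : O → ℝ) (hξ0 : ∀ o, 0 ≤ ξ o) (hξ1 : ∑ o, ξ o = 1) :
    let cond : S → O → ℝ := fun s o => M s o / ∑ s', M s' o
    let qstar : S → ℝ := fun s =>
      Real.exp (∑ o, ξ o * Real.log (cond s o)) /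
        ∑ s', Real.exp (∑ o, ξ o * Real.log (cond s' o))
    let F : (S → ℝ) → ℝ := fun q =>
      ∑ s, ∑ o, q s * ξ o * (Real.log (q s) - Real.log (M s o))
    ∀ q : S → ℝ, (∀ s, 0 ≤ q s) → ∑ s, q s = 1 → F qstar ≤ F q := by
  intro cond qstar F q hq0 hq1
  set a : S → ℝ := fun s => ∑ o, ξ o * Real.log (M s o) with ha
  set Z : ℝ := ∑ s, Real.exp (a s) with hZ
  have hT : ∀ o, 0 < ∑ s', M s' o := fun o =>
    Finset.sum_pos (fun s _ => hM s o) Finset.univ_nonempty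
  set C : ℝ := ∑ o, ξ o * Real.log (∑ s', M s' o) with hC
  have hZpos : 0 < Z := Finset.sum_pos (fun s _ => Real.exp_pos _) Finset.univ_nonempty
  -- qstar s = exp (a s) / Z
  have hinner : ∀ s, (∑ o, ξ o * Real.log (cond s o)) = a s - C := by
    intro s
    rw [ha, hC, ← Finset.sum_sub_distrib]
    refine Finset.sum_congr rfl fun o _ => ?_
    rw [Real.log_div (hM s o).ne' (hT o).ne']
    ring
  have hqstar : ∀ s, qstar s = Real.exp (a s) / Z := by
    intro s
    show Real.exp (∑ o, ξ o * Real.log (cond s o)) /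
        (∑ s', Real.exp (∑ o, ξ o * Real.log (cond s' o))) = _
    have hden : (∑ s', Real.exp (∑ o, ξ o * Real.log (cond s' o)))
        = Z * Real.exp (-C) := by
      rw [hZ, Finset.sum_mul]
      exact Finset.sum_congr rfl fun s' _ => by
        rw [hinner s', sub_eq_add_neg, Real.exp_add]
    rw [hden, hinner s, sub_eq_add_neg, Real.exp_add,
      mul_div_mul_right _ _ (Real.exp_ne_zero _)]
  have hqstar_pos : ∀ s, 0 < qstar s := fun s => by
    rw [hqstar s]; exact div_pos (Real.exp_pos _) hZpos
  have hqstar_sum : ∑ s, qstar s = 1 := by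
    simp only [hqstar]
    rw [← Finset.sum_div, ← hZ, div_self hZpos.ne']
  have hlogqstar : ∀ s, Real.log (qstar s) = a s - Real.log Z := by
    intro s
    rw [hqstar s, Real.log_div (Real.exp_pos _).ne' hZpos.ne', Real.log_exp]
  -- rewrite F
  have hF : ∀ p : S → ℝ, (∑ s, p s = 1) → F p = ∑ s, p s * (Real.log (p s) - a s) := by
    intro p _
    show (∑ s, ∑ o, p s * ξ o * (Real.log (p s) - Real.log (M s o))) = _
    refine Finset.sum_congr rfl fun s _ => ?_
    have step : ∀ o, p s * ξ o * (Real.log (p s) - Real.log (M s o))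
        = p s * Real.log (p s) * ξ o - p s * (ξ o * Real.log (M s o)) := fun o => by ring
    rw [Finset.sum_congr rfl fun o _ => step o, Finset.sum_sub_distrib, ← Finset.mul_sum,
      ← Finset.mul_sum, hξ1, ha]
    ring
  have hFq : F q = ∑ s, q s * (Real.log (q s) - a s) := hF q hq1
  have hFqstar : F qstar = -Real.log Z := by
    rw [hF qstar hqstar_sum]
    have : ∀ s, qstar s * (Real.log (qstar s) - a s) = qstar s * (-Real.log Z) := by
      intro s; rw [hlogqstar s]; ring
    rw [Finset.sum_congr rfl fun s _ => this s, ← Finset.sum_mul, hqstar_sum, one_mul]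
  have hgibbs := gibbs_aux q qstar hq0 hqstar_pos hq1 hqstar_sum
  have hexp : ∑ s, q s * (Real.log (q s) - Real.log (qstar s))
      = F q + Real.log Z := by
    rw [hFq]
    have : ∀ s, q s * (Real.log (q s) - Real.log (qstar s))
        = q s * (Real.log (q s) - a s) + q s * Real.log Z := by
      intro s; rw [hlogqstar s]; ring
    rw [Finset.sum_congr rfl fun s _ => this s, Finset.sum_add_distrib, ← Finset.sum_mul, hq1,
      one_mul]
  rw [hFqstar]
  linarith [hexp ▸ hgibbs]
end

section
/- Parallel compositionality of open variational free energy: for channels M₁ : I₁ → dist(S₁ × O₁) and M₂ : I₂ → dist(S₂ × O₂) with full support, full-support joints q₁ on I₁ × S₁ and q₂ on I₂ × S₂, and observations ξ₁ on O₁ and ξ₂ on O₂, the open VFE of the product channel M(s₁,s₂,o₁,o₂ | i₁,i₂) = M₁(s₁,o₁|i₁)M₂(s₂,o₂|i₂) with respect to the product joint q₁ ⊗ q₂ and product observation ξ₁ ⊗ ξ₂ equals F(M₁,q₁,ξ₁) + F(M₂,q₂,ξ₂). -/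
lemma prod_sum_factor {I1 S1 O1 I2 S2 O2 : Type*}
    [Fintype I1] [Fintype S1] [Fintype O1] [Fintype I2] [Fintype S2] [Fintype O2]
    (f : I1 → S1 → O1 → ℝ) (g : I2 → S2 → O2 → ℝ) :
    ∑ i : I1 × I2, ∑ s : S1 × S2, ∑ o : O1 × O2, f i.1 s.1 o.1 * g i.2 s.2 o.2
      = (∑ i, ∑ s, ∑ o, f i s o) * (∑ i, ∑ s, ∑ o, g i s o) := by
  simp_rw [Fintype.sum_prod_type, ← Finset.mul_sum, ← Finset.sum_mul]
  simp_rw [← Finset.mul_sum]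
  simp_rw [← Finset.sum_mul]
  simp_rw [← Finset.mul_sum]
  simp_rw [← Finset.sum_mul]

/-- Parallel compositionality of open variational free energy. -/
theorem open_vfe_parallel_compositional
    {I1 S1 O1 I2 S2 O2 : Type*}
    [Fintype I1] [Fintype S1] [Fintype O1] [Fintype I2] [Fintype S2] [Fintype O2]
    (M1 : I1 → S1 → O1 → ℝ) (hM1pos : ∀ i s o, 0 < M1 i s o)
    (hM1sum : ∀ i, ∑ s, ∑ o, M1 i s o = 1)
    (M2 : I2 → S2 → O2 → ℝ) (hM2pos : ∀ i s o, 0 < M2 i s o)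
    (hM2sum : ∀ i, ∑ s, ∑ o, M2 i s o = 1)
    (q1 : I1 → S1 → ℝ) (hq1pos : ∀ i s, 0 < q1 i s) (hq1sum : ∑ i, ∑ s, q1 i s = 1)
    (q2 : I2 → S2 → ℝ) (hq2pos : ∀ i s, 0 < q2 i s) (hq2sum : ∑ i, ∑ s, q2 i s = 1)
    (ξ1 : O1 → ℝ) (hξ1pos : ∀ o, 0 ≤ ξ1 o) (hξ1sum : ∑ o, ξ1 o = 1)
    (ξ2 : O2 → ℝ) (hξ2pos : ∀ o, 0 ≤ ξ2 o) (hξ2sum : ∑ o, ξ2 o = 1) :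
    -- open VFE of the product channel w.r.t. the product joint and observation
    let Ftot : ℝ := ∑ i : I1 × I2, ∑ s : S1 × S2, ∑ o : O1 × O2,
      (q1 i.1 s.1 * q2 i.2 s.2) * (ξ1 o.1 * ξ2 o.2) *
        (Real.log ((q1 i.1 s.1 * q2 i.2 s.2) / ∑ s' : S1 × S2, q1 i.1 s'.1 * q2 i.2 s'.2)
          - Real.log (M1 i.1 s.1 o.1 * M2 i.2 s.2 o.2))
    let F1 : ℝ := ∑ i, ∑ s, ∑ o,
      q1 i s * ξ1 o * (Real.log (q1 i s / ∑ s', q1 i s') - Real.log (M1 i s o))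
    let F2 : ℝ := ∑ i, ∑ s, ∑ o,
      q2 i s * ξ2 o * (Real.log (q2 i s / ∑ s', q2 i s') - Real.log (M2 i s o))
    Ftot = F1 + F2 := by
  intro Ftot F1 F2
  have hS1 : Nonempty S1 := by
    by_contra h
    rw [not_nonempty_iff] at h
    simp [Finset.univ_eq_empty] at hq1sum
  have hS2 : Nonempty S2 := by
    by_contra h
    rw [not_nonempty_iff] at h
    simp [Finset.univ_eq_empty] at hq2sum
  set A : I1 → ℝ := fun i => ∑ s', q1 i s' with hA
  set B : I2 → ℝ := fun i => ∑ s', q2 i s' with hB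
  have hApos : ∀ i, 0 < A i := fun i =>
    Finset.sum_pos (fun s _ => hq1pos i s) Finset.univ_nonempty
  have hBpos : ∀ i, 0 < B i := fun i =>
    Finset.sum_pos (fun s _ => hq2pos i s) Finset.univ_nonempty
  -- rewrite the inner normalizing sum as a product
  have hden : ∀ (i1 : I1) (i2 : I2),
      (∑ s' : S1 × S2, q1 i1 s'.1 * q2 i2 s'.2) = A i1 * B i2 := by
    intro i1 i2
    rw [Fintype.sum_prod_type, hA, hB]
    simp [Finset.sum_mul_sum]
  -- pointwise splitting of the summand
  have key : ∀ (i1 : I1) (i2 : I2) (s1 : S1) (s2 : S2) (o1 : O1) (o2 : O2),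
      (q1 i1 s1 * q2 i2 s2) * (ξ1 o1 * ξ2 o2) *
        (Real.log ((q1 i1 s1 * q2 i2 s2) / (A i1 * B i2))
          - Real.log (M1 i1 s1 o1 * M2 i2 s2 o2))
      = (q1 i1 s1 * ξ1 o1 * (Real.log (q1 i1 s1 / A i1) - Real.log (M1 i1 s1 o1)))
          * (q2 i2 s2 * ξ2 o2)
        + (q1 i1 s1 * ξ1 o1) *
          (q2 i2 s2 * ξ2 o2 * (Real.log (q2 i2 s2 / B i2) - Real.log (M2 i2 s2 o2))) := by
    intro i1 i2 s1 s2 o1 o2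
    have h1 : (q1 i1 s1 * q2 i2 s2) / (A i1 * B i2)
        = (q1 i1 s1 / A i1) * (q2 i2 s2 / B i2) := by
      rw [div_mul_div_comm]
    rw [h1, Real.log_mul (div_pos (hq1pos i1 s1) (hApos i1)).ne' (div_pos (hq2pos i2 s2) (hBpos i2)).ne',
      Real.log_mul (hM1pos i1 s1 o1).ne' (hM2pos i2 s2 o2).ne']
    ring
  have hsplit : Ftot
      = (∑ i, ∑ s, ∑ o, q1 i s * ξ1 o * (Real.log (q1 i s / A i) - Real.log (M1 i s o)))
          * (∑ i, ∑ s, ∑ o, q2 i s * ξ2 o)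
        + (∑ i, ∑ s, ∑ o, q1 i s * ξ1 o) *
          (∑ i, ∑ s, ∑ o, q2 i s * ξ2 o * (Real.log (q2 i s / B i) - Real.log (M2 i s o))) := by
    rw [show Ftot = ∑ i : I1 × I2, ∑ s : S1 × S2, ∑ o : O1 × O2,
        ((q1 i.1 s.1 * ξ1 o.1 * (Real.log (q1 i.1 s.1 / A i.1) - Real.log (M1 i.1 s.1 o.1)))
            * (q2 i.2 s.2 * ξ2 o.2)
          + (q1 i.1 s.1 * ξ1 o.1) *
            (q2 i.2 s.2 * ξ2 o.2 * (Real.log (q2 i.2 s.2 / B i.2) - Real.log (M2 i.2 s.2 o.2))))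
      from Finset.sum_congr rfl fun i _ => Finset.sum_congr rfl fun s _ =>
        Finset.sum_congr rfl fun o _ => by
          rw [hden i.1 i.2]; exact key i.1 i.2 s.1 s.2 o.1 o.2]
    simp_rw [Finset.sum_add_distrib]
    rw [prod_sum_factor (fun i s o => q1 i s * ξ1 o * (Real.log (q1 i s / A i) - Real.log (M1 i s o)))
        (fun i s o => q2 i s * ξ2 o),
      prod_sum_factor (fun i s o => q1 i s * ξ1 o)
        (fun i s o => q2 i s * ξ2 o * (Real.log (q2 i s / B i) - Real.log (M2 i s o)))]
  have hmarg1 : (∑ i, ∑ s, ∑ o, q1 i s * ξ1 o) = 1 := by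
    simp_rw [← Finset.mul_sum, hξ1sum, mul_one]
    exact hq1sum
  have hmarg2 : (∑ i, ∑ s, ∑ o, q2 i s * ξ2 o) = 1 := by
    simp_rw [← Finset.mul_sum, hξ2sum, mul_one]
    exact hq2sum
  rw [hsplit, hmarg1, hmarg2, mul_one, one_mul]
end

section
/- Pearl-style exact active inference factorization: let E be a distribution on P, M₁ : P → dist(S × O) and M₂ : O → dist(S' × F) channels (all full support), ξ a distribution on O and C a distribution on F. Then the Pearl update of the total joint distribution ω(π,s,o,s',f) = E(π)M₁(s,o|π)M₂(s',f|o) by the soft evidence ξ on O and C on F has P-marginal equal to the normalization over π of E(π) · (∑_{s,o} M₁(s,o|π)ξ(o)) · (∑_{s',f} M₂'(s',f|π) C(f)), where M₂'(s',f|π) = ∑_o M₂(s',f|o) · (M₁_O(o|π)ξ(o))/(∑_{o''} M₁_O(o''|π)ξ(o'')) is M₂ precomposed with the Pearl-updated O-distribution, and M₁_O(o|π) = ∑_s M₁(s,o|π). Explicitly: plan(π) ∝ E(π)(∑_o M₁_O(o|π)ξ(o))(∑_f C(f) ∑_o M₂_F(f|o) M₁_O(o|π)ξ(o)/∑_{o''}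 M₁_O(o''|π)ξ(o'')). -/
/-- Pearl-style exact active inference factorization. -/
theorem pearl_exact_active_inference
    {P S O S' F : Type*}
    [Fintype P] [Fintype S] [Fintype O] [Fintype S'] [Fintype F]
    [Nonempty P] [Nonempty S] [Nonempty O] [Nonempty S'] [Nonempty F]
    (E : P → ℝ) (hE : ∀ π, 0 < E π) (hE1 : ∑ π, E π = 1)
    (M1 : P → S → O → ℝ) (hM1 : ∀ π s o, 0 < M1 π s o)
    (hM1s : ∀ π, ∑ s, ∑ o, M1 π s o = 1)
    (M2 : O → S' → F → ℝ) (hM2 : ∀ o s' f, 0 < M2 o s' f)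
    (hM2s : ∀ o, ∑ s', ∑ f, M2 o s' f = 1)
    (ξ : O → ℝ) (hξ : ∀ o, 0 ≤ ξ o) (hξ1 : ∑ o, ξ o = 1)
    (C : F → ℝ) (hC : ∀ f, 0 ≤ C f) (hC1 : ∑ f, C f = 1) :
    let M1O : P → O → ℝ := fun π o => ∑ s, M1 π s o
    let M2F : O → F → ℝ := fun o f => ∑ s', M2 o s' f
    -- P-marginal of the Pearl update of the total joint by evidence ξ ⊗ C
    let plan : P → ℝ := fun π =>
      (∑ s, ∑ o, ∑ s', ∑ f, E π * M1 π s o * M2 o s' f * (ξ o * C f)) /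
        ∑ π', ∑ s, ∑ o, ∑ s', ∑ f, E π' * M1 π' s o * M2 o s' f * (ξ o * C f)
    -- the claimed factorized form
    let val : P → ℝ := fun π =>
      E π * (∑ o, M1O π o * ξ o) *
        (∑ f, C f * ∑ o, M2F o f * (M1O π o * ξ o) / ∑ o'', M1O π o'' * ξ o'')
    ∀ π, plan π = val π / ∑ π', val π' := by
  intro M1O M2F plan val
  -- positivity of the normalizer A π = ∑ o, M1O π o * ξ o
  have hA : ∀ π, 0 < ∑ o, M1O π o * ξ o := by
    intro π
    obtain ⟨o₀, ho₀⟩ : ∃ o, 0 < ξ o := by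
      by_contra h
      push_neg at h
      have : ∑ o, ξ o = 0 :=
        Finset.sum_eq_zero fun o _ => le_antisymm (h o) (hξ o)
      rw [this] at hξ1; norm_num at hξ1
    refine Finset.sum_pos' (fun o _ => mul_nonneg ?_ (hξ o))
      ⟨o₀, Finset.mem_univ o₀, ?_⟩
    · exact (Finset.sum_pos (fun s _ => (hM1 π s o).le.lt_of_ne'
        (fun h => (hM1 π s o).ne' h)) Finset.univ_nonempty).le
    · exact mul_pos (Finset.sum_pos (fun s _ => hM1 π s o₀) Finset.univ_nonempty) ho₀
  -- val π equals the un-normalized Pearl numerator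
  have hval : ∀ π, val π =
      ∑ s, ∑ o, ∑ s', ∑ f, E π * M1 π s o * M2 o s' f * (ξ o * C f) := by
    intro π
    have hA' : (∑ o, M1O π o * ξ o) ≠ 0 := (hA π).ne'
    -- reorder the quadruple sum to f, o, s', s
    have hlhs : (∑ s, ∑ o, ∑ s', ∑ f, E π * M1 π s o * M2 o s' f * (ξ o * C f))
        = ∑ f, ∑ o, ∑ s, ∑ s', E π * M1 π s o * M2 o s' f * (ξ o * C f) :=
      calc (∑ s, ∑ o, ∑ s', ∑ f, E π * M1 π s o * M2 o s' f * (ξ o * C f))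
          = ∑ s, ∑ o, ∑ f, ∑ s', E π * M1 π s o * M2 o s' f * (ξ o * C f) :=
            Finset.sum_congr rfl fun s _ => Finset.sum_congr rfl fun o _ =>
              Finset.sum_comm
        _ = ∑ s, ∑ f, ∑ o, ∑ s', E π * M1 π s o * M2 o s' f * (ξ o * C f) :=
            Finset.sum_congr rfl fun s _ => Finset.sum_comm
        _ = ∑ f, ∑ s, ∑ o, ∑ s', E π * M1 π s o * M2 o s' f * (ξ o * C f) :=
            Finset.sum_comm
        _ = ∑ f, ∑ o, ∑ s, ∑ s', E π * M1 π s o * M2 o s' f * (ξ o * C f) :=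
            Finset.sum_congr rfl fun f _ => Finset.sum_comm
    rw [hlhs]
    show E π * (∑ o, M1O π o * ξ o) *
        (∑ f, C f * ∑ o, M2F o f * (M1O π o * ξ o) / ∑ o'', M1O π o'' * ξ o'') = _
    simp only [← Finset.sum_div, ← mul_div_assoc]
    rw [mul_right_comm, mul_div_assoc, div_self hA', mul_one]
    show E π * ∑ f, C f * ∑ o, (∑ s', M2 o s' f) * ((∑ s, M1 π s o) * ξ o) = _
    simp only [Finset.mul_sum, Finset.sum_mul]
    refine Finset.sum_congr rfl fun f _ => Finset.sum_congr rfl fun o _ =>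
      Finset.sum_congr rfl fun s _ => Finset.sum_congr rfl fun s' _ => by ring
  intro π
  show (∑ s, ∑ o, ∑ s', ∑ f, E π * M1 π s o * M2 o s' f * (ξ o * C f)) /
        (∑ π', ∑ s, ∑ o, ∑ s', ∑ f, E π' * M1 π' s o * M2 o s' f * (ξ o * C f))
      = val π / ∑ π', val π'
  rw [hval π]
  congr 1
  exact Finset.sum_congr rfl fun π' _ => (hval π').symm
end
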